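/- Let A ∈ ℂ^{M×N_a} and B ∈ ℂ^{M×N_b} be matrices with unit ℓ²-norm columns, with coherences μ_a and μ_b respectively and mutual coherence μ_m. Let z = A x + B e where ‖x‖₀ = n_x and ‖e‖₀ = n_e. If μ_m² · 4 n_x n_e < [1 − μ_a(2n_x−1)]_+ · [1 − μ_b(2n_e−1)]_+, then x is the unique solution of the problem (P0, n_e): for every x' ∈ ℂ^{N_a} with ‖x'‖₀ ≤ n_x for which there exists e' ∈ ℂ^{N_b} with ‖e'‖₀ ≤ n_e and A x' + B e' = z, one has x' = x. -/

import Mathlib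

open scoped BigOperators ComplexConjugate
open Matrix

/-- Coherence of a matrix: max over distinct column pairs of |aₖᴴ aₗ| (0 if fewer than 2 columns). -/
noncomputable def coh {m n : Type*} [Fintype m] [Fintype n] (A : Matrix m n ℂ) : ℝ :=
  ⨆ k, ⨆ l, ⨆ _ : k ≠ l, ‖∑ i, conj (A i k) * A i l‖

/-- Mutual coherence between two matrices: max over column pairs of |aₖᴴ bₗ|. -/
noncomputable def mcoh {m na nb : Type*} [Fintype m] [Fintype na] [Fintype nb]
    (A : Matrix m na ℂ) (B : Matrix m nb ℂ) : ℝ :=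
  ⨆ k, ⨆ l, ‖∑ i, conj (A i k) * B i l‖

/-- All columns have unit ℓ²-norm. -/
def unitCols {m n : Type*} [Fintype m] (A : Matrix m n ℂ) : Prop :=
  ∀ k, ∑ i, ‖A i k‖ ^ 2 = 1

/-- Number of nonzero entries of a vector. -/
noncomputable def l0 {n : Type*} (v : n → ℂ) : ℕ := {i | v i ≠ 0}.ncard

/-- ℓ¹ norm of a vector. -/
noncomputable def l1 {n : Type*} [Fintype n] (v : n → ℂ) : ℝ := ∑ i, ‖v i‖

/-- Squared ℓ² norm of a vector. -/
noncomputable def l2sq {n : Type*} [Fintype n] (v : n → ℂ) : ℝ := ∑ i, ‖v i‖ ^ 2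

/-- Submatrix consisting of the columns with index in `E`. -/
def colsub {m n : Type*} (B : Matrix m n ℂ) (E : Finset n) : Matrix m {j // j ∈ E} ℂ :=
  fun i j => B i j.val

/-- Orthogonal projector onto the orthogonal complement of the column span of `B_E`. -/
noncomputable def projC {m n : Type*} [Fintype m] [DecidableEq m] [DecidableEq n]
    (B : Matrix m n ℂ) (E : Finset n) : Matrix m m ℂ :=
  1 - colsub B E * ((colsub B E)ᴴ * colsub B E)⁻¹ * (colsub B E)ᴴ

section auxlemmas
variable {m na nb : Type*} [Fintype m] [Fintype na] [Fintype nb]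

private lemma coh_nonneg (A : Matrix m na ℂ) : 0 ≤ coh A :=
  Real.iSup_nonneg fun _ => Real.iSup_nonneg fun _ => Real.iSup_nonneg fun _ => norm_nonneg _

private lemma mcoh_nonneg (A : Matrix m na ℂ) (B : Matrix m nb ℂ) : 0 ≤ mcoh A B :=
  Real.iSup_nonneg fun _ => Real.iSup_nonneg fun _ => norm_nonneg _

private lemma le_coh (A : Matrix m na ℂ) {k l : na} (hkl : k ≠ l) :
    ‖∑ i, conj (A i k) * A i l‖ ≤ coh A := by
  have h3 : (⨆ _ : k ≠ l, ‖∑ i, conj (A i k) * A i l‖) = ‖∑ i, conj (A i k) * A i l‖ :=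
    ciSup_pos hkl
  have h2 : (⨆ _ : k ≠ l, ‖∑ i, conj (A i k) * A i l‖)
      ≤ ⨆ l', ⨆ _ : k ≠ l', ‖∑ i, conj (A i k) * A i l'‖ :=
    le_ciSup (Set.Finite.bddAbove (Set.finite_range
      fun l' => ⨆ _ : k ≠ l', ‖∑ i, conj (A i k) * A i l'‖)) l
  have h1 : (⨆ l', ⨆ _ : k ≠ l', ‖∑ i, conj (A i k) * A i l'‖) ≤ coh A :=
    le_ciSup (Set.Finite.bddAbove (Set.finite_range
      fun k' => ⨆ l', ⨆ _ : k' ≠ l', ‖∑ i, conj (A i k') * A i l'‖)) k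
  rw [← h3]
  exact h2.trans h1

private lemma le_mcoh (A : Matrix m na ℂ) (B : Matrix m nb ℂ) (k : na) (l : nb) :
    ‖∑ i, conj (A i k) * B i l‖ ≤ mcoh A B := by
  have h2 : ‖∑ i, conj (A i k) * B i l‖ ≤ ⨆ l', ‖∑ i, conj (A i k) * B i l'‖ :=
    le_ciSup (Set.Finite.bddAbove (Set.finite_range fun l' => ‖∑ i, conj (A i k) * B i l'‖)) l
  have h1 : (⨆ l', ‖∑ i, conj (A i k) * B i l'‖) ≤ mcoh A B :=
    le_ciSup (Set.Finite.bddAbove (Set.finite_range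
      fun k' => ⨆ l', ‖∑ i, conj (A i k') * B i l'‖)) k
  exact h2.trans h1

private lemma l1_nonneg (v : na → ℂ) : 0 ≤ l1 v :=
  Finset.sum_nonneg fun _ _ => norm_nonneg _

private lemma l2sq_nonneg (v : na → ℂ) : 0 ≤ l2sq v :=
  Finset.sum_nonneg fun _ _ => sq_nonneg _

private lemma l2sq_eq_zero {v : na → ℂ} (h : l2sq v = 0) : v = 0 := by
  funext i
  have := (Finset.sum_eq_zero_iff_of_nonneg
    (fun j _ => sq_nonneg ‖v j‖)).mp h i (Finset.mem_univ i)
  simpa using this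

private lemma l1_sq_le (v : na → ℂ) : l1 v ^ 2 ≤ (l0 v : ℝ) * l2sq v := by
  classical
  have hset : {i | v i ≠ 0} = ↑(Finset.univ.filter fun i => v i ≠ 0) := by
    ext i; simp
  have hl0 : (l0 v : ℝ) = (Finset.univ.filter fun i => v i ≠ 0).card := by
    rw [l0, hset, Set.ncard_coe_finset]
  have hl1 : l1 v = ∑ i ∈ Finset.univ.filter fun i => v i ≠ 0, ‖v i‖ := by
    rw [l1]
    refine (Finset.sum_filter_of_ne fun i _ h => ?_).symm
    simpa using fun h0 => h (by simp [h0])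
  have hl2 : ∑ i ∈ Finset.univ.filter (fun i => v i ≠ 0), ‖v i‖ ^ 2 ≤ l2sq v :=
    Finset.sum_le_sum_of_subset_of_nonneg (Finset.filter_subset _ _)
      (fun _ _ _ => sq_nonneg _)
  calc l1 v ^ 2 = (∑ i ∈ Finset.univ.filter fun i => v i ≠ 0, ‖v i‖) ^ 2 := by rw [hl1]
    _ ≤ (Finset.univ.filter fun i => v i ≠ 0).card *
        ∑ i ∈ Finset.univ.filter fun i => v i ≠ 0, ‖v i‖ ^ 2 := sq_sum_le_card_mul_sum_sq
    _ ≤ (l0 v : ℝ) * l2sq v := by rw [hl0]; gcongr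

private lemma l0_sub_le (x y : na → ℂ) : l0 (x - y) ≤ l0 x + l0 y := by
  classical
  have hsub : {i | (x - y) i ≠ 0} ⊆ {i | x i ≠ 0} ∪ {i | y i ≠ 0} := by
    intro i hi
    simp only [Set.mem_union, Set.mem_setOf_eq] at *
    by_contra h
    push_neg at h
    exact hi (by simp [Pi.sub_apply, h.1, h.2])
  calc l0 (x - y) ≤ ({i | x i ≠ 0} ∪ {i | y i ≠ 0}).ncard :=
        Set.ncard_le_ncard hsub (Set.toFinite _)
    _ ≤ l0 x + l0 y := Set.ncard_union_le _ _

end auxlemmas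

section ipsec
variable {M Na Nb : ℕ}

private lemma ip_expand (A : Matrix (Fin M) (Fin Na) ℂ) (B : Matrix (Fin M) (Fin Nb) ℂ)
    (u : Fin Na → ℂ) (v : Fin Nb → ℂ) :
    ∑ i, conj (A.mulVec u i) * (B.mulVec v i)
      = ∑ k, ∑ l, conj (u k) * v l * ∑ i, conj (A i k) * B i l := by
  calc ∑ i, conj (A.mulVec u i) * (B.mulVec v i)
      = ∑ i, ∑ k, ∑ l, conj (A i k * u k) * (B i l * v l) := by
        refine Finset.sum_congr rfl fun i _ => ?_
        simp only [Matrix.mulVec, dotProduct, map_sum]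
        rw [Finset.sum_mul_sum]
    _ = ∑ k, ∑ i, ∑ l, conj (A i k * u k) * (B i l * v l) := Finset.sum_comm
    _ = ∑ k, ∑ l, ∑ i, conj (A i k * u k) * (B i l * v l) :=
        Finset.sum_congr rfl fun k _ => Finset.sum_comm
    _ = ∑ k, ∑ l, conj (u k) * v l * ∑ i, conj (A i k) * B i l := by
        refine Finset.sum_congr rfl fun k _ => Finset.sum_congr rfl fun l _ => ?_
        rw [Finset.mul_sum]
        refine Finset.sum_congr rfl fun i _ => ?_
        simp only [_root_.map_mul]; ring

private lemma re_ip_self (w : Fin M → ℂ) : (∑ i, conj (w i) * w i).re = l2sq w := by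
  have h : ∑ i, conj (w i) * w i = ((l2sq w : ℝ) : ℂ) := by
    rw [l2sq]
    push_cast
    exact Finset.sum_congr rfl fun i _ => by
      rw [← Complex.ofReal_pow]
      exact_mod_cast Complex.conj_mul' (w i)
  rw [h, Complex.ofReal_re]

private lemma offdiag_abs (u : Fin Na → ℂ) :
    ∑ k, ∑ l ∈ Finset.univ.erase k, ‖u k‖ * ‖u l‖ = l1 u ^ 2 - l2sq u := by
  classical
  have h1 : l1 u ^ 2 = ∑ k, ∑ l, ‖u k‖ * ‖u l‖ := by
    rw [l1, sq, Finset.sum_mul_sum]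
  have h2 : ∀ k : Fin Na, ∑ l, ‖u k‖ * ‖u l‖
      = ‖u k‖ ^ 2 + ∑ l ∈ Finset.univ.erase k, ‖u k‖ * ‖u l‖ := fun k => by
    rw [← Finset.add_sum_erase _ _ (Finset.mem_univ k), sq]
  rw [h1, Finset.sum_congr rfl fun k _ => h2 k, Finset.sum_add_distrib]
  rw [l2sq]
  ring

private lemma gersh (A : Matrix (Fin M) (Fin Na) ℂ) (hA : unitCols A) (u : Fin Na → ℂ) :
    l2sq u - coh A * (l1 u ^ 2 - l2sq u) ≤ (∑ i, conj (A.mulVec u i) * (A.mulVec u i)).re := by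
  classical
  have hdiag : ∀ k : Fin Na, ∑ i, conj (A i k) * A i k = 1 := by
    intro k
    have : ∑ i, conj (A i k) * A i k = ((∑ i, ‖A i k‖ ^ 2 : ℝ) : ℂ) := by
      push_cast
      exact Finset.sum_congr rfl fun i _ => by
        rw [← Complex.ofReal_pow]
        exact_mod_cast Complex.conj_mul' (A i k)
    rw [this, hA k, Complex.ofReal_one]
  rw [ip_expand]
  have hsplit : ∑ k, ∑ l, conj (u k) * u l * ∑ i, conj (A i k) * A i l
      = ((l2sq u : ℝ) : ℂ)
        + ∑ k, ∑ l ∈ Finset.univ.erase k, conj (u k) * u l * ∑ i, conj (A i k) * A i l := by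
    have h1 : ∀ k : Fin Na, ∑ l, conj (u k) * u l * ∑ i, conj (A i k) * A i l
        = conj (u k) * u k * ∑ i, conj (A i k) * A i k
          + ∑ l ∈ Finset.univ.erase k, conj (u k) * u l * ∑ i, conj (A i k) * A i l :=
      fun k => (Finset.add_sum_erase _ _ (Finset.mem_univ k)).symm
    rw [Finset.sum_congr rfl fun k _ => h1 k, Finset.sum_add_distrib]
    congr 1
    rw [l2sq]
    push_cast
    refine Finset.sum_congr rfl fun k _ => ?_
    rw [hdiag k, mul_one, ← Complex.ofReal_pow]
    exact_mod_cast Complex.conj_mul' (u k)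
  rw [hsplit, Complex.add_re, Complex.ofReal_re]
  set S : ℂ := ∑ k, ∑ l ∈ Finset.univ.erase k, conj (u k) * u l * ∑ i, conj (A i k) * A i l
    with hSdef
  have hSb : ‖S‖ ≤ coh A * (l1 u ^ 2 - l2sq u) := by
    calc ‖S‖ ≤ ∑ k, ‖∑ l ∈ Finset.univ.erase k, conj (u k) * u l * ∑ i, conj (A i k) * A i l‖ :=
          norm_sum_le _ _
      _ ≤ ∑ k, ∑ l ∈ Finset.univ.erase k, ‖conj (u k) * u l * ∑ i, conj (A i k) * A i l‖ :=
          Finset.sum_le_sum fun k _ => norm_sum_le _ _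
      _ ≤ ∑ k, ∑ l ∈ Finset.univ.erase k, ‖u k‖ * ‖u l‖ * coh A := by
          refine Finset.sum_le_sum fun k _ => Finset.sum_le_sum fun l hl => ?_
          rw [norm_mul, norm_mul, RCLike.norm_conj]
          have hkl : k ≠ l := (Finset.ne_of_mem_erase hl).symm
          exact mul_le_mul_of_nonneg_left (le_coh A hkl)
            (mul_nonneg (norm_nonneg _) (norm_nonneg _))
      _ = coh A * (l1 u ^ 2 - l2sq u) := by
          rw [← offdiag_abs u, Finset.mul_sum]
          refine Finset.sum_congr rfl fun k _ => ?_
          rw [Finset.mul_sum]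
          exact Finset.sum_congr rfl fun l _ => by ring
  have hre : -‖S‖ ≤ S.re := by
    have h := Complex.abs_re_le_norm S
    exact (abs_le.mp h).1
  linarith

private lemma ip_norm_le (A : Matrix (Fin M) (Fin Na) ℂ) (B : Matrix (Fin M) (Fin Nb) ℂ)
    (u : Fin Na → ℂ) (v : Fin Nb → ℂ) :
    ‖∑ i, conj (A.mulVec u i) * (B.mulVec v i)‖ ≤ mcoh A B * (l1 u * l1 v) := by
  rw [ip_expand]
  calc ‖∑ k, ∑ l, conj (u k) * v l * ∑ i, conj (A i k) * B i l‖
      ≤ ∑ k, ‖∑ l, conj (u k) * v l * ∑ i, conj (A i k) * B i l‖ := norm_sum_le _ _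
    _ ≤ ∑ k, ∑ l, ‖conj (u k) * v l * ∑ i, conj (A i k) * B i l‖ :=
        Finset.sum_le_sum fun k _ => norm_sum_le _ _
    _ ≤ ∑ k, ∑ l, ‖u k‖ * ‖v l‖ * mcoh A B := by
        refine Finset.sum_le_sum fun k _ => Finset.sum_le_sum fun l _ => ?_
        rw [norm_mul, norm_mul, RCLike.norm_conj]
        exact mul_le_mul_of_nonneg_left (le_mcoh A B k l)
          (mul_nonneg (norm_nonneg _) (norm_nonneg _))
    _ = mcoh A B * (l1 u * l1 v) := by
        rw [l1, l1, Finset.sum_mul_sum, Finset.mul_sum]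
        refine Finset.sum_congr rfl fun k _ => ?_
        rw [Finset.mul_sum]
        exact Finset.sum_congr rfl fun l _ => by ring

end ipsec

set_option maxHeartbeats 2000000 in
/-- Theorem 5: x is the unique solution of (P0, n_e). -/
theorem P0ne_unique_solution
    {M Na Nb : ℕ} (A : Matrix (Fin M) (Fin Na) ℂ) (B : Matrix (Fin M) (Fin Nb) ℂ)
    (hA : unitCols A) (hB : unitCols B)
    (μa μb μm : ℝ) (hμa : μa = coh A) (hμb : μb = coh B) (hμm : μm = mcoh A B)
    (x : Fin Na → ℂ) (e : Fin Nb → ℂ)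
    (nx ne : ℕ) (hnx : l0 x = nx) (hne : l0 e = ne)
    (z : Fin M → ℂ) (hz : z = A.mulVec x + B.mulVec e)
    (hcond : μm ^ 2 * (4 * nx * ne) <
      max (1 - μa * (2 * (nx : ℝ) - 1)) 0 * max (1 - μb * (2 * (ne : ℝ) - 1)) 0) :
    ∀ x' : Fin Na → ℂ, l0 x' ≤ nx →
      (∃ e' : Fin Nb → ℂ, l0 e' ≤ ne ∧ A.mulVec x' + B.mulVec e' = z) →
      x' = x := by
  rintro x' hx' ⟨e', he', heq⟩
  set u : Fin Na → ℂ := x' - x with hu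
  set v : Fin Nb → ℂ := e - e' with hv
  have h0 : A.mulVec x' + B.mulVec e' = A.mulVec x + B.mulVec e := by rw [← hz]; exact heq
  have huv : A.mulVec u = B.mulVec v := by
    rw [hu, hv]
    funext i
    have h1 := congrFun h0 i
    simp only [Pi.add_apply] at h1
    simp only [Matrix.mulVec_sub, Pi.sub_apply]
    linear_combination h1
  have hμa0 : 0 ≤ μa := hμa ▸ coh_nonneg A
  have hμb0 : 0 ≤ μb := hμb ▸ coh_nonneg B
  have hμm0 : 0 ≤ μm := hμm ▸ mcoh_nonneg A B
  set ca := max (1 - μa * (2 * (nx : ℝ) - 1)) 0 with hca_def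
  set cb := max (1 - μb * (2 * (ne : ℝ) - 1)) 0 with hcb_def
  have hca0 : 0 ≤ ca := le_max_right _ _
  have hcb0 : 0 ≤ cb := le_max_right _ _
  have hK0 : 0 ≤ μm ^ 2 * (4 * (nx : ℝ) * (ne : ℝ)) := by positivity
  have hca : 0 < ca := by
    by_contra h
    push_neg at h
    have hz0 : ca = 0 := le_antisymm h hca0
    rw [hz0, zero_mul] at hcond
    linarith
  have hcb : 0 < cb := by
    by_contra h
    push_neg at h
    have hz0 : cb = 0 := le_antisymm h hcb0
    rw [hz0, mul_zero] at hcond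
    linarith
  have hl0u : (l0 u : ℝ) ≤ 2 * (nx : ℝ) := by
    have h2 : l0 u ≤ nx + nx := by
      rw [hu]
      exact (l0_sub_le x' x).trans (add_le_add hx' hnx.le)
    calc (l0 u : ℝ) ≤ ((nx + nx : ℕ) : ℝ) := by exact_mod_cast h2
      _ = 2 * (nx : ℝ) := by push_cast; ring
  have hl0v : (l0 v : ℝ) ≤ 2 * (ne : ℝ) := by
    have h2 : l0 v ≤ ne + ne := by
      rw [hv]
      exact (l0_sub_le e e').trans (add_le_add hne.le he')
    calc (l0 v : ℝ) ≤ ((ne + ne : ℕ) : ℝ) := by exact_mod_cast h2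
      _ = 2 * (ne : ℝ) := by push_cast; ring
  have hs0 : 0 ≤ l2sq u := l2sq_nonneg u
  have ht0 : 0 ≤ l2sq v := l2sq_nonneg v
  have h4 : l1 u ^ 2 ≤ 2 * (nx : ℝ) * l2sq u :=
    (l1_sq_le u).trans (mul_le_mul_of_nonneg_right hl0u hs0)
  have h5 : l1 v ^ 2 ≤ 2 * (ne : ℝ) * l2sq v :=
    (l1_sq_le v).trans (mul_le_mul_of_nonneg_right hl0v ht0)
  set R := l2sq (A.mulVec u) with hR
  have hR0 : 0 ≤ R := l2sq_nonneg _
  have hRre : R = (∑ i, conj (A.mulVec u i) * (A.mulVec u i)).re := (re_ip_self _).symm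
  have hAu : ca * l2sq u ≤ R := by
    rcases max_choice (1 - μa * (2 * (nx : ℝ) - 1)) 0 with h | h
    · rw [hca_def, h]
      have hg := gersh A hA u
      rw [← hRre, ← hμa] at hg
      nlinarith [mul_le_mul_of_nonneg_left h4 hμa0]
    · rw [hca_def, h, zero_mul]
      exact hR0
  have hRv : R = (∑ i, conj (B.mulVec v i) * (B.mulVec v i)).re := by
    rw [hRre, huv]
  have hBv : cb * l2sq v ≤ R := by
    rcases max_choice (1 - μb * (2 * (ne : ℝ) - 1)) 0 with h | h
    · rw [hcb_def, h]
      have hg := gersh B hB v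
      rw [← hRv, ← hμb] at hg
      nlinarith [mul_le_mul_of_nonneg_left h5 hμb0]
    · rw [hcb_def, h, zero_mul]
      exact hR0
  have hup : R ≤ μm * (l1 u * l1 v) := by
    have h1 : ∑ i, conj (A.mulVec u i) * (B.mulVec v i)
        = ∑ i, conj (A.mulVec u i) * (A.mulVec u i) := by rw [huv]
    have h2 : R ≤ ‖∑ i, conj (A.mulVec u i) * (B.mulVec v i)‖ := by
      rw [h1, hRre]
      exact Complex.re_le_norm _
    have h3 := ip_norm_le A B u v
    rw [← hμm] at h3
    exact h2.trans h3
  have hsuff : l2sq u = 0 := by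
    by_contra hs
    have hspos : 0 < l2sq u := lt_of_le_of_ne hs0 (Ne.symm hs)
    have hRpos : 0 < R := lt_of_lt_of_le (mul_pos hca hspos) hAu
    have htpos : 0 < l2sq v := by
      rcases lt_or_eq_of_le ht0 with h | h
      · exact h
      · exfalso
        rw [← h] at h5
        have hl1v : l1 v = 0 := by nlinarith [l1_nonneg v]
        rw [hl1v, mul_zero, mul_zero] at hup
        linarith
    have e1 : (ca * l2sq u) * (cb * l2sq v) ≤ R * R :=
      mul_le_mul hAu hBv (mul_nonneg hcb0 ht0) hR0
    have e2 : R * R ≤ (μm * (l1 u * l1 v)) * (μm * (l1 u * l1 v)) :=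
      mul_le_mul hup hup hR0
        (mul_nonneg hμm0 (mul_nonneg (l1_nonneg u) (l1_nonneg v)))
    have e4 : μm ^ 2 * (l1 u ^ 2 * l1 v ^ 2)
        ≤ μm ^ 2 * ((2 * (nx : ℝ) * l2sq u) * (2 * (ne : ℝ) * l2sq v)) := by
      refine mul_le_mul_of_nonneg_left ?_ (sq_nonneg μm)
      exact mul_le_mul h4 h5 (sq_nonneg _) (mul_nonneg (by positivity) hs0)
    have hcc := mul_lt_mul_of_pos_right hcond (mul_pos hspos htpos)
    nlinarith [e1, e2, e4, hcc]
  have hu0 : u = 0 := l2sq_eq_zero hsuff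
  rw [hu] at hu0
  exact sub_eq_zero.mp hu0
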